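/- arXiv:1806.05702 — 4 statements merged into one kernel-verified Lean document; each statement's English description precedes it below -/
import Mathlib

section
/- For 0 < H < 1, the maximum of the Takagi–Landsberg function x^H over [0,1] equals 1/(3(1 − 2^{−H})). -/
open Filter Finset Set MeasureTheory ProbabilityTheory

noncomputable def e00 (t : ℝ) : ℝ := max (min t (1 - t)) 0

noncomputable def fs (m : ℕ) (k : ℤ) (t : ℝ) : ℝ :=
  (2 : ℝ) ^ (-(m : ℝ) / 2) * e00 ((2 : ℝ) ^ m * t - (k : ℝ))

def IsSign (θ : ℕ → ℕ → ℝ) : Prop := ∀ m k, θ m k = 1 ∨ θ m k = -1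

noncomputable def tlTerm (H : ℝ) (θ : ℕ → ℕ → ℝ) (m : ℕ) (t : ℝ) : ℝ :=
  (2 : ℝ) ^ ((m : ℝ) * (1 / 2 - H)) *
    ∑ k ∈ Finset.range (2 ^ m), θ m k * fs m (k : ℤ) t

noncomputable def sPartial (H : ℝ) (θ : ℕ → ℕ → ℝ) (n : ℕ) (t : ℝ) : ℝ :=
  ∑ m ∈ Finset.range n, tlTerm H θ m t

def MemX (H : ℝ) (x : ℝ → ℝ) : Prop :=
  ∃ θ : ℕ → ℕ → ℝ, IsSign θ ∧ ∀ t : ℝ, x t = ∑' m : ℕ, tlTerm H θ m t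

noncomputable def xTL (H : ℝ) (t : ℝ) : ℝ := ∑' m : ℕ, tlTerm H (fun _ _ => 1) m t

noncomputable def dyadicSum (p : ℝ) (x : ℝ → ℝ) (n : ℕ) (t : ℝ) : ℝ :=
  ∑ k ∈ Finset.range (2 ^ n),
    if (k : ℝ) / 2 ^ n ≤ t then |x (((k : ℝ) + 1) / 2 ^ n) - x ((k : ℝ) / 2 ^ n)| ^ p else 0

noncomputable def nuFloor (h : ℝ) : ℤ := ⌊-(Real.logb 2 h)⌋

noncomputable def omegaH (H h : ℝ) : ℝ :=
  h * (2 : ℝ) ^ (((nuFloor h : ℝ) - 1) * (1 - H)) / ((2 : ℝ) ^ (1 - H) - 1) +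
    (2 : ℝ) ^ ((1 - (nuFloor h : ℝ)) * H) / (3 * (1 - (2 : ℝ) ^ (-H)))


/-!
On `[0, 1]` the `m`-th layer of `xTL H` is `a ^ m * distToInt (2 ^ m * t)` with `a = 2 ^ (-H)`,
since the tents `e_{m,k}` tile `[0, 1]` and add up to the distance from `2 ^ m * t` to `ℤ`.
At `t = 1/3` every distance equals `1/3`, giving the value `1 / (3 * (1 - a))`. For the upper
bound, the potential `thirdDeficit u = max (1/3 - distToInt u) 0` satisfies
`distToInt u - 1/3 ≤ a * thirdDeficit (2 * u) - thirdDeficit u` as soon as `a ≥ 1/2`, so the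
partial sums telescope.
-/

noncomputable def distToInt (u : ℝ) : ℝ := min (Int.fract u) (1 - Int.fract u)

lemma distToInt_nonneg (u : ℝ) : 0 ≤ distToInt u :=
  le_min (Int.fract_nonneg u) (by linarith [Int.fract_lt_one u])

lemma distToInt_le_half (u : ℝ) : distToInt u ≤ 1 / 2 := by
  unfold distToInt
  rcases le_total (Int.fract u) (1 / 2) with h | h
  · exact (min_le_left _ _).trans h
  · exact (min_le_right _ _).trans (by linarith)

lemma distToInt_two_mul (u : ℝ) :
    distToInt (2 * u) = min (2 * distToInt u) (1 - 2 * distToInt u) := by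
  have hf0 := Int.fract_nonneg u
  have hf1 := Int.fract_lt_one u
  have hshift : Int.fract (2 * u) = Int.fract (2 * Int.fract u) := by
    rw [show 2 * u = 2 * Int.fract u + ((2 * ⌊u⌋ : ℤ) : ℝ) by push_cast [Int.fract]; ring,
      Int.fract_add_intCast]
  rcases lt_or_ge (Int.fract u) (1 / 2) with h | h
  · have hd : distToInt u = Int.fract u := min_eq_left (by linarith)
    rw [hd, distToInt, hshift, Int.fract_eq_self.mpr ⟨by linarith, by linarith⟩]
  · have hd : distToInt u = 1 - Int.fract u := min_eq_right (by linarith)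
    have hfract : Int.fract (2 * Int.fract u) = 2 * Int.fract u - 1 := by
      rw [Int.fract_eq_iff]
      exact ⟨by linarith, by linarith, 1, by push_cast; ring⟩
    rw [hd, distToInt, hshift, hfract, min_comm]
    ring_nf

lemma distToInt_two_pow_mul_third (m : ℕ) : distToInt (2 ^ m * (1 / 3)) = 1 / 3 := by
  induction m with
  | zero => norm_num [distToInt, Int.fract_eq_self.mpr]
  | succ n ih =>
    rw [pow_succ', mul_assoc, distToInt_two_mul, ih]
    norm_num

lemma e00_sub_natCast_of_ne_floor {u : ℝ} (hu : 0 ≤ u) {k : ℕ} (hk : k ≠ ⌊u⌋₊) :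
    e00 (u - k) = 0 := by
  have hfloor := Nat.floor_le hu
  have hfloor' := Nat.lt_floor_add_one u
  unfold e00
  rcases hk.lt_or_gt with hlt | hgt
  · have : (k : ℝ) + 1 ≤ ⌊u⌋₊ := by exact_mod_cast hlt
    exact max_eq_right ((min_le_right _ _).trans (by linarith))
  · have : (⌊u⌋₊ : ℝ) + 1 ≤ k := by exact_mod_cast hgt
    exact max_eq_right ((min_le_left _ _).trans (by linarith))

lemma e00_sub_floor {u : ℝ} (hu : 0 ≤ u) : e00 (u - ⌊u⌋₊) = distToInt u := by
  have hfract : u - ⌊u⌋₊ = Int.fract u := by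
    rw [Int.fract, ← Int.natCast_floor_eq_floor hu, Int.cast_natCast]
  rw [hfract, e00, distToInt, max_eq_left]
  exact distToInt_nonneg u

lemma sum_range_e00_sub_natCast {u : ℝ} {N : ℕ} (h0 : 0 ≤ u) (hN : u ≤ N) :
    ∑ k ∈ Finset.range N, e00 (u - k) = distToInt u := by
  rw [Finset.sum_eq_single ⌊u⌋₊ (fun k _ hk => e00_sub_natCast_of_ne_floor h0 hk), e00_sub_floor h0]
  intro hnotMem
  -- the floor lies outside `range N` only when `u = N`, where the tent vanishes
  have hu : u = N := le_antisymm hN <| by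
    simpa using (Nat.floor_le h0).trans' (Nat.cast_le.mpr (not_lt.mp (by simpa using hnotMem)))
  simp [hu, e00]

lemma tlTerm_one_eq (H : ℝ) {t : ℝ} (ht : t ∈ Set.Icc (0 : ℝ) 1) (m : ℕ) :
    tlTerm H (fun _ _ => 1) m t = ((2 : ℝ) ^ (-H)) ^ m * distToInt (2 ^ m * t) := by
  have hpow : (0 : ℝ) < 2 ^ m := by positivity
  have hsum : ∑ k ∈ Finset.range (2 ^ m), e00 (2 ^ m * t - ((k : ℤ) : ℝ)) =
      distToInt (2 ^ m * t) := by
    simpa using sum_range_e00_sub_natCast (N := 2 ^ m) (mul_nonneg hpow.le ht.1)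
      (by push_cast; nlinarith [ht.2])
  have hscale : (2 : ℝ) ^ ((m : ℝ) * (1 / 2 - H)) * 2 ^ (-(m : ℝ) / 2) = ((2 : ℝ) ^ (-H)) ^ m := by
    rw [← Real.rpow_natCast, ← Real.rpow_mul zero_le_two, ← Real.rpow_add two_pos]
    ring_nf
  simp only [tlTerm, fs, one_mul]
  rw [← Finset.mul_sum, hsum, ← mul_assoc, hscale]

noncomputable def thirdDeficit (u : ℝ) : ℝ := max (1 / 3 - distToInt u) 0

lemma distToInt_sub_third_le {a : ℝ} (ha : 1 / 2 ≤ a) (u : ℝ) :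
    distToInt u - 1 / 3 ≤ a * thirdDeficit (2 * u) - thirdDeficit u := by
  have hd0 := distToInt_nonneg u
  have hd1 := distToInt_le_half u
  unfold thirdDeficit
  rcases le_or_gt (distToInt u) (1 / 3) with h | h
  · rw [max_eq_left (show (0 : ℝ) ≤ 1 / 3 - distToInt u by linarith)]
    nlinarith [le_max_right (1 / 3 - distToInt (2 * u)) 0]
  · have hdouble : distToInt (2 * u) = 1 - 2 * distToInt u := by
      rw [distToInt_two_mul, min_eq_right (by linarith)]
    rw [max_eq_right (show 1 / 3 - distToInt u ≤ 0 by linarith), hdouble,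
      max_eq_left (show (0 : ℝ) ≤ 1 / 3 - (1 - 2 * distToInt u) by linarith)]
    nlinarith [mul_nonneg (by linarith : (0 : ℝ) ≤ a - 1 / 2) (by linarith : 0 ≤ distToInt u - 1 / 3)]

lemma sum_range_pow_mul_distToInt_le {a : ℝ} (ha : 1 / 2 ≤ a) (ha1 : a < 1) (t : ℝ) (n : ℕ) :
    ∑ m ∈ Finset.range n, a ^ m * distToInt (2 ^ m * t) ≤ 1 / (3 * (1 - a)) := by
  set G : ℕ → ℝ := fun m => a ^ m * thirdDeficit (2 ^ m * t)
  have hstep (m : ℕ) : a ^ m * distToInt (2 ^ m * t) ≤ a ^ m / 3 + (G (m + 1) - G m) := by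
    have := mul_le_mul_of_nonneg_left (distToInt_sub_third_le ha (2 ^ m * t))
      (pow_nonneg (by linarith) m)
    rw [← mul_assoc, ← pow_succ'] at this
    simp only [G, pow_succ a m]
    linarith
  have hGn : G n ≤ a ^ n / 3 := by
    have : thirdDeficit (2 ^ n * t) ≤ 1 / 3 :=
      max_le (by linarith [distToInt_nonneg (2 ^ n * t)]) (by norm_num)
    simp only [G]
    nlinarith [pow_nonneg (by linarith : 0 ≤ a) n]
  have hG0 : 0 ≤ G 0 := by simp [G, thirdDeficit]
  calc ∑ m ∈ Finset.range n, a ^ m * distToInt (2 ^ m * t)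
      ≤ ∑ m ∈ Finset.range n, (a ^ m / 3 + (G (m + 1) - G m)) := Finset.sum_le_sum fun m _ => hstep m
    _ = (∑ m ∈ Finset.range n, a ^ m) / 3 + (G n - G 0) := by
      rw [Finset.sum_add_distrib, Finset.sum_range_sub, Finset.sum_div]
    _ ≤ (∑ m ∈ Finset.range (n + 1), a ^ m) / 3 := by
      rw [Finset.sum_range_succ]
      linarith
    _ ≤ (a ^ 0 / (1 - a)) / 3 := by
      rw [Finset.range_eq_Ico]
      gcongr
      exact geom_sum_Ico_le_of_lt_one (by linarith) ha1
    _ = 1 / (3 * (1 - a)) := by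
      rw [pow_zero, div_div, mul_comm]

lemma tsum_pow_mul_distToInt_le {a : ℝ} (ha : 1 / 2 ≤ a) (ha1 : a < 1) (t : ℝ) :
    ∑' m : ℕ, a ^ m * distToInt (2 ^ m * t) ≤ 1 / (3 * (1 - a)) :=
  Real.tsum_le_of_sum_range_le
    (fun m => mul_nonneg (pow_nonneg (by linarith) m) (distToInt_nonneg _))
    (sum_range_pow_mul_distToInt_le ha ha1 t)

lemma tsum_pow_mul_distToInt_third {a : ℝ} (ha : 0 ≤ a) (ha1 : a < 1) :
    ∑' m : ℕ, a ^ m * distToInt (2 ^ m * (1 / 3)) = 1 / (3 * (1 - a)) := by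
  simp only [distToInt_two_pow_mul_third]
  rw [tsum_mul_right, tsum_geometric_of_lt_one ha ha1]
  field_simp

lemma xTL_eq_tsum (H : ℝ) {t : ℝ} (ht : t ∈ Set.Icc (0 : ℝ) 1) :
    xTL H t = ∑' m : ℕ, ((2 : ℝ) ^ (-H)) ^ m * distToInt (2 ^ m * t) :=
  tsum_congr (tlTerm_one_eq H ht)

theorem stmt2 (H : ℝ) (hH : H ∈ Set.Ioo (0:ℝ) 1) :
    IsGreatest (xTL H '' Set.Icc 0 1) (1 / (3 * (1 - (2:ℝ) ^ (-H)))) := by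
  obtain ⟨hH0, hH1⟩ := hH
  have ha1 : (2 : ℝ) ^ (-H) < 1 := Real.rpow_lt_one_of_one_lt_of_neg one_lt_two (by linarith)
  have ha : 1 / 2 ≤ (2 : ℝ) ^ (-H) := by
    simpa [Real.rpow_neg_one] using
      Real.rpow_le_rpow_of_exponent_le one_le_two (by linarith : (-1 : ℝ) ≤ -H)
  refine ⟨⟨1 / 3, by norm_num, ?_⟩, ?_⟩
  · rw [xTL_eq_tsum H (by norm_num), tsum_pow_mul_distToInt_third (by positivity) ha1]
  · rintro _ ⟨t, ht, rfl⟩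
    rw [xTL_eq_tsum H ht]
    exact tsum_pow_mul_distToInt_le ha ha1 t
end

section
/- Let 0 < H < 1 and define the truncated Takagi–Landsberg function x_n^H(t) = Σ_{m=0}^{n−1} 2^{m(1/2−H)} Σ_{k=0}^{2^m−1} e_{m,k}(t) for n ≥ 1. Then the maximum of x_n^H over [0,1] equals M_n^H = 1/(3(1−2^{−H})) + (−1)^{n−1}/(3(2^{1−H}+1)·2^n) − 2^{−nH}/((1+2^{1−H})(2^H−1)), and it is attained exactly at the two points t_n^− = 2^{−n} J_n and t_n^+ = 1 − t_n^−, where J_n = (2^n − (−1)^n)/3 are the Jacobsthal numbers. -/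
open Filter Finset Set MeasureTheory ProbabilityTheory

/-!
With `r = 2^{-H}`, the partial sums satisfy `x_n(1 - t) = x_n(t)` and, on `[0, 1/2]`, the
self-similarity `x_{n+1}(t) = t + r x_n(2t) = t + r x_n(1 - 2t)`. Hence a maximiser `t ≤ 1/2` of
`x_{n+1}` must balance the linear term against `x_n` at `1 - 2t`, which leads to the points
`t_{n+1} = (1 - t_n)/2` (the Jacobsthal ratios) and the values `M_{n+1} = t_{n+1} + r M_n`.
The induction also tracks how far `x_n` stays below `M_n` left of `t_n`; this is where
`r ≥ 1/2` enters, and `r > 1/2` makes the maximisers unique.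
-/

open Real

lemma e00_of_nonpos {s : ℝ} (hs : s ≤ 0) : e00 s = 0 :=
  max_eq_right ((min_le_left _ _).trans hs)

lemma e00_of_le_half {s : ℝ} (h0 : 0 ≤ s) (h1 : s ≤ 1 / 2) : e00 s = s := by
  rw [e00, min_eq_left (by linarith), max_eq_left h0]

lemma e00_one_sub (s : ℝ) : e00 (1 - s) = e00 s := by
  rw [e00, e00, sub_sub_cancel, min_comm]

/-- The truncated Takagi–Landsberg function `x_n^H`. -/
noncomputable abbrev takagiPartial (H : ℝ) (n : ℕ) : ℝ → ℝ := sPartial H (fun _ _ => 1) n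

lemma tlTerm_one (H : ℝ) (m : ℕ) (t : ℝ) :
    tlTerm H (fun _ _ => 1) m t
      = (2 : ℝ) ^ (-(m * H)) * ∑ k ∈ range (2 ^ m), e00 (2 ^ m * t - k) := by
  simp only [tlTerm, fs, one_mul, Int.cast_natCast, ← mul_sum, ← mul_assoc, ← rpow_add two_pos]
  ring_nf

lemma sum_e00_one_sub (m : ℕ) (t : ℝ) :
    ∑ k ∈ range (2 ^ m), e00 (2 ^ m * (1 - t) - k) = ∑ k ∈ range (2 ^ m), e00 (2 ^ m * t - k) := by
  rw [← sum_range_reflect]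
  refine sum_congr rfl fun k hk => ?_
  have hk : k ≤ 2 ^ m - 1 := by have := mem_range.1 hk; omega
  rw [Nat.cast_sub hk, Nat.cast_pred (Nat.two_pow_pos m), Nat.cast_pow, Nat.cast_two, ← e00_one_sub]
  ring_nf

lemma takagiPartial_one_sub (H : ℝ) (n : ℕ) (t : ℝ) :
    takagiPartial H n (1 - t) = takagiPartial H n t :=
  sum_congr rfl fun m _ => by rw [tlTerm_one, tlTerm_one, sum_e00_one_sub]

/-- On `[0, 1/2]` only the first half of the hat functions of level `m + 1` is non-zero, and
they are the hat functions of level `m` evaluated at `2 t`. -/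
lemma sum_e00_pow_succ_of_le_half (m : ℕ) {t : ℝ} (ht : t ≤ 1 / 2) :
    ∑ k ∈ range (2 ^ (m + 1)), e00 (2 ^ (m + 1) * t - k)
      = ∑ k ∈ range (2 ^ m), e00 (2 ^ m * (2 * t) - k) := by
  rw [← sum_subset (range_subset_range.2 (Nat.pow_le_pow_right two_pos m.le_succ))]
  · exact sum_congr rfl fun k _ => by ring_nf
  · intro k _ hk
    have hk : (2 : ℝ) ^ m ≤ k := by exact_mod_cast not_lt.1 (mt mem_range.2 hk)
    apply e00_of_nonpos
    have : (2 : ℝ) ^ (m + 1) * t ≤ 2 ^ m := by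
      rw [pow_succ]; nlinarith [pow_pos (two_pos : (0 : ℝ) < 2) m]
    linarith

lemma takagiPartial_succ_of_mem_Icc (H : ℝ) (n : ℕ) {t : ℝ} (ht : t ∈ Icc (0 : ℝ) (1 / 2)) :
    takagiPartial H (n + 1) t = t + 2 ^ (-H) * takagiPartial H n (2 * t) := by
  rw [takagiPartial, sPartial, sum_range_succ', add_comm, takagiPartial, sPartial, mul_sum]
  congr 1
  · simp [tlTerm_one, e00_of_le_half ht.1 ht.2]
  · refine sum_congr rfl fun m _ => ?_
    rw [tlTerm_one, tlTerm_one, sum_e00_pow_succ_of_le_half m ht.2,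
      ← mul_assoc ((2 : ℝ) ^ (-H)), ← rpow_add two_pos]
    push_cast
    ring_nf

/-- `t_n^- = J_n / 2^n`, with `J_n` the Jacobsthal numbers. -/
noncomputable def jacobsthalPoint (n : ℕ) : ℝ := (2 ^ n - (-1) ^ n) / 3 / 2 ^ n

lemma jacobsthalPoint_zero : jacobsthalPoint 0 = 0 := by norm_num [jacobsthalPoint]

lemma jacobsthalPoint_succ (n : ℕ) : jacobsthalPoint (n + 1) = (1 - jacobsthalPoint n) / 2 := by
  rw [jacobsthalPoint, jacobsthalPoint]
  field_simp
  ring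

lemma jacobsthalPoint_mem_Icc (n : ℕ) : jacobsthalPoint n ∈ Icc (0 : ℝ) (1 / 2) := by
  induction n with
  | zero => simp [jacobsthalPoint_zero]
  | succ n ih => rw [jacobsthalPoint_succ]; constructor <;> linarith [ih.1, ih.2]

/-- The maximum `M_n` of `x_n^H` as a function of `r = 2^{-H}`, through its recursion. -/
noncomputable def takagiMax (r : ℝ) : ℕ → ℝ
  | 0 => 0
  | n + 1 => jacobsthalPoint (n + 1) + r * takagiMax r n

lemma takagiMax_eq {r : ℝ} (hr₁ : r ≠ 1) (hr₂ : 1 + 2 * r ≠ 0) (n : ℕ) :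
    takagiMax r n = 1 / (3 * (1 - r)) - (-1) ^ n / (3 * (1 + 2 * r) * 2 ^ n)
      - r ^ (n + 1) / ((1 + 2 * r) * (1 - r)) := by
  have hr₁ : 1 - r ≠ 0 := sub_ne_zero.2 hr₁.symm
  have hr₂ : 1 + r * 2 ≠ 0 := by rwa [mul_comm]
  induction n with
  | zero => simp only [takagiMax]; field_simp; ring
  | succ n ih =>
    rw [takagiMax, ih, jacobsthalPoint]
    field_simp
    ring

lemma takagiPartial_jacobsthalPoint (H : ℝ) (n : ℕ) :
    takagiPartial H n (jacobsthalPoint n) = takagiMax (2 ^ (-H)) n := by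
  induction n with
  | zero => simp [sPartial, takagiMax]
  | succ n ih =>
    rw [takagiPartial_succ_of_mem_Icc H n (jacobsthalPoint_mem_Icc _), takagiMax,
      jacobsthalPoint_succ, mul_div_cancel₀ _ two_ne_zero, takagiPartial_one_sub, ih]

lemma takagiMax_succ_sub_takagiPartial (H : ℝ) (n : ℕ) {t : ℝ} (ht : t ∈ Icc (0 : ℝ) (1 / 2)) :
    takagiMax (2 ^ (-H)) (n + 1) - takagiPartial H (n + 1) t
      = (1 - 2 * t - jacobsthalPoint n) / 2
        + 2 ^ (-H) * (takagiMax (2 ^ (-H)) n - takagiPartial H n (1 - 2 * t)) := by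
  rw [takagiPartial_succ_of_mem_Icc H n ht, takagiMax, jacobsthalPoint_succ,
    ← takagiPartial_one_sub H n (2 * t)]
  ring

lemma forall_Icc_le_of_forall_Icc_half_le {f : ℝ → ℝ} (hf : ∀ t, f (1 - t) = f t) {c : ℝ}
    (h : ∀ t ∈ Icc (0 : ℝ) (1 / 2), f t ≤ c) : ∀ t ∈ Icc (0 : ℝ) 1, f t ≤ c := by
  rintro t ⟨ht₀, ht₁⟩
  rcases le_total t (1 / 2) with ht | ht
  · exact h t ⟨ht₀, ht⟩
  · rw [← hf]; exact h (1 - t) ⟨by linarith, by linarith⟩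

lemma half_le_two_rpow_neg {H : ℝ} (hH : H ≤ 1) : 1 / 2 ≤ (2 : ℝ) ^ (-H) := by
  simpa [rpow_neg_one] using rpow_le_rpow_of_exponent_le one_le_two (neg_le_neg hH)

lemma half_lt_two_rpow_neg {H : ℝ} (hH : H < 1) : 1 / 2 < (2 : ℝ) ^ (-H) := by
  simpa [rpow_neg_one] using rpow_lt_rpow_of_exponent_lt one_lt_two (neg_lt_neg hH)

/-- Besides `x_n ≤ M_n`, the induction carries a linear margin to the left of `t_n^-`: for the
next level, `1 - 2t < t_n^-` costs `(t_n^- - (1 - 2t)) / 2` and the margin, scaled by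
`2^{-H} ≥ 1/2`, pays for it. -/
lemma takagiPartial_le_takagiMax {H : ℝ} (hH : H ≤ 1) (n : ℕ) :
    (∀ t ∈ Icc (0 : ℝ) 1, takagiPartial H n t ≤ takagiMax (2 ^ (-H)) n) ∧
      ∀ t ∈ Icc 0 (jacobsthalPoint n),
        takagiPartial H n t + (jacobsthalPoint n - t) ≤ takagiMax (2 ^ (-H)) n := by
  have hr := half_le_two_rpow_neg hH
  induction n with
  | zero =>
    simp only [jacobsthalPoint_zero, takagiMax, sPartial, range_zero, sum_empty]
    exact ⟨fun _ _ => le_rfl, fun t ht => by linarith [ht.1, ht.2]⟩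
  | succ n ih =>
    obtain ⟨hle, hmargin⟩ := ih
    have hp := jacobsthalPoint_mem_Icc n
    have hgap : ∀ t ∈ Icc (0 : ℝ) (1 / 2),
        0 ≤ takagiMax (2 ^ (-H)) n - takagiPartial H n (1 - 2 * t) := fun t ht =>
      sub_nonneg.2 (hle _ ⟨by linarith [ht.2], by linarith [ht.1]⟩)
    refine ⟨forall_Icc_le_of_forall_Icc_half_le (takagiPartial_one_sub H (n + 1)) fun t ht => ?_,
      fun t ht => ?_⟩
    · have key := takagiMax_succ_sub_takagiPartial H n ht
      have := hgap t ht
      rcases le_total (jacobsthalPoint n) (1 - 2 * t) with hu | hu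
      · nlinarith
      · have := hmargin (1 - 2 * t) ⟨by linarith [ht.2], hu⟩
        nlinarith
    · have ht' : t ∈ Icc (0 : ℝ) (1 / 2) := ⟨ht.1, ht.2.trans (jacobsthalPoint_mem_Icc _).2⟩
      have key := takagiMax_succ_sub_takagiPartial H n ht'
      have := hgap t ht'
      rw [jacobsthalPoint_succ] at ht ⊢
      nlinarith [ht.2]

lemma eq_jacobsthalPoint_of_takagiPartial_eq_takagiMax {H : ℝ} (hH : H < 1) (n : ℕ) {t : ℝ}
    (ht : t ∈ Icc (0 : ℝ) (1 / 2)) (h : takagiPartial H (n + 1) t = takagiMax (2 ^ (-H)) (n + 1)) :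
    t = jacobsthalPoint (n + 1) := by
  have hr := half_lt_two_rpow_neg hH
  obtain ⟨hle, hmargin⟩ := takagiPartial_le_takagiMax hH.le n
  have hp := jacobsthalPoint_mem_Icc n
  have key := takagiMax_succ_sub_takagiPartial H n ht
  have hgap := hle (1 - 2 * t) ⟨by linarith [ht.2], by linarith [ht.1]⟩
  rw [h, sub_self] at key
  rw [jacobsthalPoint_succ]
  by_contra hne
  rcases lt_or_gt_of_ne (fun hu : 1 - 2 * t = jacobsthalPoint n => hne (by linarith)) with hu | hu
  · have := hmargin (1 - 2 * t) ⟨by linarith [ht.2], hu.le⟩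
    nlinarith
  · nlinarith

lemma takagiPartial_eq_takagiMax_iff {H : ℝ} (hH : H < 1) (n : ℕ) {t : ℝ}
    (ht : t ∈ Icc (0 : ℝ) 1) :
    takagiPartial H (n + 1) t = takagiMax (2 ^ (-H)) (n + 1) ↔
      t = jacobsthalPoint (n + 1) ∨ t = 1 - jacobsthalPoint (n + 1) := by
  constructor
  · intro h
    rcases le_total t (1 / 2) with ht' | ht'
    · exact .inl (eq_jacobsthalPoint_of_takagiPartial_eq_takagiMax hH n ⟨ht.1, ht'⟩ h)
    · rw [← takagiPartial_one_sub] at h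
      have := eq_jacobsthalPoint_of_takagiPartial_eq_takagiMax hH n
        ⟨by linarith [ht.2], by linarith⟩ h
      exact .inr (by linarith)
  · rintro (rfl | rfl)
    · exact takagiPartial_jacobsthalPoint H (n + 1)
    · rw [takagiPartial_one_sub]
      exact takagiPartial_jacobsthalPoint H (n + 1)

lemma takagiMax_two_rpow_neg_eq {H : ℝ} (hH : H ∈ Ioo (0 : ℝ) 1) (n : ℕ) :
    takagiMax (2 ^ (-H)) (n + 1)
      = 1 / (3 * (1 - (2 : ℝ) ^ (-H))) + (-1 : ℝ) ^ n / (3 * ((2 : ℝ) ^ (1 - H) + 1) * 2 ^ (n + 1))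
        - (2 : ℝ) ^ (-((n + 1 : ℕ) : ℝ) * H) / ((1 + (2 : ℝ) ^ (1 - H)) * ((2 : ℝ) ^ H - 1)) := by
  set r : ℝ := 2 ^ (-H) with hr
  have hr₀ : 0 < r := rpow_pos_of_pos two_pos _
  have hr₁ : r < 1 := rpow_lt_one_of_one_lt_of_neg one_lt_two (neg_neg_of_pos hH.1)
  have h₁ : (2 : ℝ) ^ (1 - H) = 2 * r := by rw [sub_eq_add_neg, rpow_add two_pos, rpow_one]
  have h₂ : (2 : ℝ) ^ H = r⁻¹ := by rw [hr, rpow_neg zero_le_two, inv_inv]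
  have h₃ : (2 : ℝ) ^ (-((n + 1 : ℕ) : ℝ) * H) = r ^ (n + 1) := by
    rw [neg_mul, ← mul_neg, mul_comm, rpow_mul zero_le_two, rpow_natCast]
  rw [takagiMax_eq hr₁.ne (by positivity), h₁, h₂, h₃, pow_succ (-1 : ℝ)]
  have : r⁻¹ - 1 ≠ 0 := sub_ne_zero.2 (one_lt_inv₀ hr₀ |>.2 hr₁).ne'
  have : 1 - r ≠ 0 := sub_ne_zero.2 hr₁.ne'
  field_simp
  ring

lemma jacobsthalPoint_mem_Icc_zero_one (n : ℕ) :
    jacobsthalPoint n ∈ Icc (0 : ℝ) 1 ∧ 1 - jacobsthalPoint n ∈ Icc (0 : ℝ) 1 := by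
  obtain ⟨h₀, h₁⟩ := jacobsthalPoint_mem_Icc n
  exact ⟨⟨h₀, by linarith⟩, ⟨by linarith, by linarith⟩⟩

lemma isGreatest_takagiPartial {H : ℝ} (hH : H ≤ 1) (n : ℕ) :
    IsGreatest (takagiPartial H n '' Icc 0 1) (takagiMax (2 ^ (-H)) n) :=
  ⟨⟨_, (jacobsthalPoint_mem_Icc_zero_one n).1, takagiPartial_jacobsthalPoint H n⟩,
    by rintro _ ⟨t, ht, rfl⟩; exact (takagiPartial_le_takagiMax hH n).1 t ht⟩

lemma setOf_takagiPartial_eq_takagiMax {H : ℝ} (hH : H < 1) (n : ℕ) :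
    {t : ℝ | t ∈ Icc (0 : ℝ) 1 ∧ takagiPartial H (n + 1) t = takagiMax (2 ^ (-H)) (n + 1)}
      = {jacobsthalPoint (n + 1), 1 - jacobsthalPoint (n + 1)} := by
  ext t
  refine ⟨fun ⟨ht, h⟩ => (takagiPartial_eq_takagiMax_iff hH n ht).1 h, fun h => ?_⟩
  have ht : t ∈ Icc (0 : ℝ) 1 := by
    rcases h with rfl | rfl
    exacts [(jacobsthalPoint_mem_Icc_zero_one _).1, (jacobsthalPoint_mem_Icc_zero_one _).2]
  exact ⟨ht, (takagiPartial_eq_takagiMax_iff hH n ht).2 h⟩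

theorem stmt4 (H : ℝ) (hH : H ∈ Set.Ioo (0:ℝ) 1) (n : ℕ) (hn : 1 ≤ n) :
    let xn : ℝ → ℝ := sPartial H (fun _ _ => 1) n
    let M : ℝ := 1 / (3 * (1 - (2:ℝ)^(-H))) + (-1:ℝ)^(n-1) / (3 * ((2:ℝ)^(1-H) + 1) * 2^n)
      - (2:ℝ)^(-(n:ℝ)*H) / ((1 + (2:ℝ)^(1-H)) * ((2:ℝ)^H - 1))
    let J : ℝ := (2^n - (-1:ℝ)^n) / 3
    let tm : ℝ := J / 2^n
    IsGreatest (xn '' Set.Icc 0 1) M ∧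
      {t : ℝ | t ∈ Set.Icc (0:ℝ) 1 ∧ xn t = M} = {tm, 1 - tm} := by
  obtain ⟨m, rfl⟩ : ∃ m, n = m + 1 := ⟨n - 1, by omega⟩
  intro xn M J tm
  rw [show M = takagiMax (2 ^ (-H)) (m + 1) from (takagiMax_two_rpow_neg_eq hH m).symm]
  exact ⟨isGreatest_takagiPartial hH.2.le (m + 1), setOf_takagiPartial_eq_takagiMax hH.2 m⟩
end

section
/- Let p ≥ 1 and let x, y ∈ C[0,1] each admit a continuous p-th variation along the dyadic partitions (𝕋_n), with ⟨y⟩^{(p)}_t = 0 for all t. Then x + y admits the continuous p-th variation ⟨x + y⟩^{(p)}_t = ⟨x⟩^{(p)}_t for all t ∈ [0,1]. -/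
/-!
The dyadic sum `∑ |Δx|^p` is the `p`-th power of the `ℓ^p` norm of the vector of increments of `x`,
which is additive in `x`. Minkowski's inequality therefore bounds the difference of the `1/p`-th
powers of the sums for `x + y` and for `x` by the `1/p`-th power of the sum for `y`, which tends
to `0`; raising back to the power `p` gives the convergence of the sums for `x + y` to `⟨x⟩^{(p)}`.
-/

open Filter Finset Set MeasureTheory ProbabilityTheory

def HasPthVarAlong (p : ℝ) (x v : ℝ → ℝ) : Prop :=
  ContinuousOn v (Set.Icc 0 1) ∧
    ∀ t ∈ Set.Icc (0:ℝ) 1, Tendsto (fun n => dyadicSum p x n t) atTop (nhds (v t))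

open Topology

noncomputable def dyadicIncrement (x : ℝ → ℝ) (n : ℕ) (t : ℝ) (k : ℕ) : ℝ :=
  if (k : ℝ) / 2 ^ n ≤ t then x (((k : ℝ) + 1) / 2 ^ n) - x ((k : ℝ) / 2 ^ n) else 0

lemma dyadicIncrement_add (x y : ℝ → ℝ) (n : ℕ) (t : ℝ) (k : ℕ) :
    dyadicIncrement (fun s => x s + y s) n t k = dyadicIncrement x n t k + dyadicIncrement y n t k := by
  unfold dyadicIncrement
  split_ifs <;> ring

lemma dyadicSum_eq_sum_abs_rpow {p : ℝ} (hp : 0 < p) (x : ℝ → ℝ) (n : ℕ) (t : ℝ) :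
    dyadicSum p x n t = ∑ k ∈ range (2 ^ n), |dyadicIncrement x n t k| ^ p := by
  refine sum_congr rfl fun k _ => ?_
  unfold dyadicIncrement
  split_ifs <;> simp [Real.zero_rpow hp.ne']

lemma dyadicSum_nonneg (p : ℝ) (x : ℝ → ℝ) (n : ℕ) (t : ℝ) : 0 ≤ dyadicSum p x n t :=
  sum_nonneg fun _ _ => by split_ifs <;> positivity

lemma dyadicSum_neg (p : ℝ) (y : ℝ → ℝ) (n : ℕ) (t : ℝ) :
    dyadicSum p (fun s => -y s) n t = dyadicSum p y n t := by
  refine sum_congr rfl fun k _ => ?_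
  rw [neg_sub_neg, abs_sub_comm]

lemma dyadicSum_add_rpow_le {p : ℝ} (hp : 1 ≤ p) (x y : ℝ → ℝ) (n : ℕ) (t : ℝ) :
    dyadicSum p (fun s => x s + y s) n t ^ (1 / p) ≤
      dyadicSum p x n t ^ (1 / p) + dyadicSum p y n t ^ (1 / p) := by
  have hp₀ : 0 < p := zero_lt_one.trans_le hp
  simp only [dyadicSum_eq_sum_abs_rpow hp₀, dyadicIncrement_add]
  exact Real.Lp_add_le _ _ _ hp

lemma abs_dyadicSum_add_rpow_sub_le {p : ℝ} (hp : 1 ≤ p) (x y : ℝ → ℝ) (n : ℕ) (t : ℝ) :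
    |dyadicSum p (fun s => x s + y s) n t ^ (1 / p) - dyadicSum p x n t ^ (1 / p)| ≤
      dyadicSum p y n t ^ (1 / p) := by
  have hxy := dyadicSum_add_rpow_le hp x y n t
  -- Minkowski again, for `x = (x + y) + (-y)`.
  have hyx := dyadicSum_add_rpow_le hp (fun s => x s + y s) (fun s => -y s) n t
  simp only [add_neg_cancel_right, dyadicSum_neg] at hyx
  rw [abs_sub_le_iff]
  constructor <;> linarith

lemma tendsto_of_abs_rpow_sub_le {α : Type*} {l : Filter α} {p L : ℝ} {a b c : α → ℝ}
    (hp : 0 < p) (ha : ∀ i, 0 ≤ a i) (hL : 0 ≤ L) (hb : Tendsto b l (𝓝 L))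
    (hc : Tendsto c l (𝓝 0)) (habc : ∀ i, |a i ^ (1 / p) - b i ^ (1 / p)| ≤ c i ^ (1 / p)) :
    Tendsto a l (𝓝 L) := by
  have hp' : 0 < 1 / p := by positivity
  have hb' : Tendsto (fun i => b i ^ (1 / p)) l (𝓝 (L ^ (1 / p))) := hb.rpow_const (.inr hp'.le)
  have hc' : Tendsto (fun i => c i ^ (1 / p)) l (𝓝 0) := by
    simpa only [Real.zero_rpow hp'.ne'] using hc.rpow_const (.inr hp'.le)
  have ha' : Tendsto (fun i => a i ^ (1 / p)) l (𝓝 (L ^ (1 / p))) := by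
    simpa using (squeeze_zero_norm habc hc').add hb'
  have hrpow_inv {s : ℝ} (hs : 0 ≤ s) : (s ^ (1 / p)) ^ p = s := by
    rw [← Real.rpow_mul hs, one_div_mul_cancel hp.ne', Real.rpow_one]
  simpa only [hrpow_inv (ha _), hrpow_inv hL] using ha'.rpow_const (.inr hp.le)

theorem stmt12_general (p : ℝ) (hp : 1 ≤ p) (x y vx vy : ℝ → ℝ)
    (hx : HasPthVarAlong p x vx) (hy : HasPthVarAlong p y vy)
    (hy0 : ∀ t ∈ Set.Icc (0:ℝ) 1, vy t = 0) :
    HasPthVarAlong p (fun t => x t + y t) vx := by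
  refine ⟨hx.1, fun t ht => ?_⟩
  have hvx : 0 ≤ vx t := ge_of_tendsto' (hx.2 t ht) fun n => dyadicSum_nonneg p x n t
  have hvy : Tendsto (fun n => dyadicSum p y n t) atTop (𝓝 0) := hy0 t ht ▸ hy.2 t ht
  exact tendsto_of_abs_rpow_sub_le (zero_lt_one.trans_le hp) (fun n => dyadicSum_nonneg p _ n t)
    hvx (hx.2 t ht) hvy fun n => abs_dyadicSum_add_rpow_sub_le hp x y n t

theorem stmt12 (p : ℝ) (hp : 1 ≤ p) (x y vx vy : ℝ → ℝ)
    (hxc : ContinuousOn x (Set.Icc 0 1)) (hyc : ContinuousOn y (Set.Icc 0 1))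
    (hx : HasPthVarAlong p x vx) (hy : HasPthVarAlong p y vy)
    (hy0 : ∀ t ∈ Set.Icc (0:ℝ) 1, vy t = 0) :
    HasPthVarAlong p (fun t => x t + y t) vx :=
  stmt12_general p hp x y vx vy hx hy hy0
end

section
/- Let H ∈ (0,1), x ∈ 𝔛^H, n ∈ ℕ, and 0 ≤ k < 2^n. Then x((k+1)2^{−n}) − x(k2^{−n}) = 2^{−n} Σ_{m=0}^{n−1} 2^{m(1−H)} σ_{m,k} for some signs σ_{m,k} ∈ {−1,+1}. Moreover, as k ranges over {0,…,2^n−1}, the sign vector (σ_{0,k},…,σ_{n−1,k}) runs through all of {−1,+1}^n, each element appearing exactly once. -/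
open Filter Finset Set MeasureTheory ProbabilityTheory

/-!
At a dyadic point `k 2⁻ⁿ` every Faber–Schauder function of level `m ≥ n` vanishes, so `x` agrees
with its level-`n` truncation there. For `m < n` exactly one level-`m` hat is non-constant on
`[k 2⁻ⁿ, (k+1) 2⁻ⁿ]`, with slope `±2^{m/2}`; this gives the increment formula. Knowing the top `m`
binary digits of `k`, the sign `σ_{m,k}` determines the next one, so `k ↦ (σ_{m,k})_{m<n}` is an
injection from `2ⁿ` indices into the `2ⁿ` sign vectors, hence a bijection.
-/

lemma e00_of_nonpos_s13 {u : ℝ} (h : u ≤ 0) : e00 u = 0 :=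
  max_eq_right ((min_le_left _ _).trans h)

lemma e00_of_one_le {u : ℝ} (h : 1 ≤ u) : e00 u = 0 :=
  max_eq_right ((min_le_right _ _).trans (by linarith))

lemma e00_intCast (z : ℤ) : e00 z = 0 := by
  rcases le_or_gt z 0 with h | h
  · exact e00_of_nonpos_s13 (by exact_mod_cast h)
  · exact e00_of_one_le (by exact_mod_cast h)

lemma e00_of_nonneg_of_le_half {u : ℝ} (h0 : 0 ≤ u) (h : u ≤ 1 / 2) : e00 u = u := by
  rw [e00, min_eq_left (by linarith), max_eq_left h0]

lemma e00_of_half_le_of_le_one {u : ℝ} (h : 1 / 2 ≤ u) (h1 : u ≤ 1) : e00 u = 1 - u := by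
  rw [e00, min_eq_right (by linarith), max_eq_left (by linarith)]

lemma e00_half_add_sub (q ℓ : ℕ) {u : ℝ} (hu0 : 0 ≤ u) (hu : u ≤ 1 / 2) :
    e00 (((q : ℝ) - 2 * ℓ) / 2 + u) - e00 (((q : ℝ) - 2 * ℓ) / 2)
      = if ℓ = q / 2 then (-1) ^ q * u else 0 := by
  rcases lt_or_ge q (2 * ℓ) with hlt | hge
  · have hj : (q : ℝ) + 1 ≤ 2 * ℓ := by exact_mod_cast hlt
    rw [e00_of_nonpos_s13 (by linarith), e00_of_nonpos_s13 (by linarith), if_neg (by omega), sub_zero]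
  obtain ⟨j, rfl⟩ := Nat.exists_eq_add_of_le hge
  rcases j with _ | _ | j
  · rw [if_pos (by omega), add_zero, pow_mul, neg_one_sq, one_pow]
    simp [e00_of_nonneg_of_le_half hu0 hu, e00_of_nonpos_s13]
  · rw [if_pos (by omega), pow_succ, pow_mul, neg_one_sq, one_pow]
    push_cast
    rw [e00_of_half_le_of_le_one (by linarith) (by linarith),
      e00_of_half_le_of_le_one (by linarith) (by linarith)]
    ring
  · have hj : (0 : ℝ) ≤ j := j.cast_nonneg
    push_cast
    rw [e00_of_one_le (by linarith), e00_of_one_le (by linarith), if_neg (by omega), sub_zero]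

lemma fs_natCast_div_two_pow {m n : ℕ} (hnm : n ≤ m) (ℓ : ℤ) (k : ℕ) :
    fs m ℓ ((k : ℝ) / 2 ^ n) = 0 := by
  obtain ⟨j, rfl⟩ := Nat.exists_eq_add_of_le hnm
  have hpoint : (2 : ℝ) ^ (n + j) * ((k : ℝ) / 2 ^ n) - ℓ = ((k * 2 ^ j : ℕ) - ℓ : ℤ) := by
    push_cast
    field_simp
    ring
  rw [fs, hpoint, e00_intCast, mul_zero]

lemma fs_add_one_div_sub (m d k ℓ : ℕ) :
    fs m ℓ (((k : ℝ) + 1) / 2 ^ (m + d + 1)) - fs m ℓ ((k : ℝ) / 2 ^ (m + d + 1))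
      = if ℓ = k / 2 ^ d / 2 then (-1) ^ (k / 2 ^ d) * 2 ^ (-(m : ℝ) / 2) / 2 ^ (d + 1) else 0 := by
  set q := k / 2 ^ d
  set r := k % 2 ^ d
  have hk : (k : ℝ) = 2 ^ d * q + r := by exact_mod_cast (Nat.div_add_mod k (2 ^ d)).symm
  have hr : (r : ℝ) + 1 ≤ 2 ^ d := by exact_mod_cast Nat.mod_lt k (by positivity)
  have hpoint (s : ℝ) : (2 : ℝ) ^ m * ((2 ^ d * q + s) / 2 ^ (m + d + 1)) - (ℓ : ℤ)
      = ((q : ℝ) - 2 * ℓ) / 2 + s / 2 ^ (d + 1) := by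
    push_cast
    field_simp
    ring
  have hhalf (s : ℝ) (hs : s ≤ 2 ^ d) : s / 2 ^ (d + 1) ≤ 1 / 2 := by
    rw [div_le_div_iff₀ (by positivity) (by positivity), pow_succ]
    linarith
  have hupper := e00_half_add_sub q ℓ (by positivity) (hhalf ((r : ℝ) + 1) hr)
  have hlower := e00_half_add_sub q ℓ (by positivity) (hhalf (r : ℝ) (by linarith))
  rw [fs, fs, hk, add_assoc, hpoint, hpoint]
  split_ifs at hupper hlower ⊢ <;>
    linear_combination (2 : ℝ) ^ (-(m : ℝ) / 2) * (hupper - hlower)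

lemma tlTerm_natCast_div_two_pow (H : ℝ) (θ : ℕ → ℕ → ℝ) {m n : ℕ} (hnm : n ≤ m) (k : ℕ) :
    tlTerm H θ m ((k : ℝ) / 2 ^ n) = 0 := by
  simp [tlTerm, fs_natCast_div_two_pow hnm]

lemma tsum_tlTerm_natCast_div_two_pow (H : ℝ) (θ : ℕ → ℕ → ℝ) (n k : ℕ) :
    ∑' m, tlTerm H θ m ((k : ℝ) / 2 ^ n) = sPartial H θ n ((k : ℝ) / 2 ^ n) :=
  tsum_eq_sum fun _ hm => tlTerm_natCast_div_two_pow H θ (not_lt.mp (mem_range.not.mp hm)) k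

/-- `σ_{m,k}`: for `m < n`, `k / 2 ^ (n - m - 1)` indexes the level-`(m+1)` dyadic interval
containing `[k 2⁻ⁿ, (k+1) 2⁻ⁿ]`; its half indexes the level-`m` interval, whose Faber–Schauder
function rises on the even and falls on the odd half. -/
def incrementSign (θ : ℕ → ℕ → ℝ) (n m k : ℕ) : ℝ :=
  θ m (k / 2 ^ (n - m - 1) / 2) * (-1) ^ (k / 2 ^ (n - m - 1))

lemma IsSign.incrementSign {θ : ℕ → ℕ → ℝ} (hθ : IsSign θ) (n : ℕ) :
    IsSign (incrementSign θ n) := by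
  intro m k
  rcases hθ m (k / 2 ^ (n - m - 1) / 2) with h | h <;>
    rcases neg_one_pow_eq_or ℝ (k / 2 ^ (n - m - 1)) with h' | h' <;>
    simp [_root_.incrementSign, h, h']

lemma tlTerm_add_one_div_sub (H : ℝ) (θ : ℕ → ℕ → ℝ) {m n k : ℕ} (hmn : m < n) (hk : k < 2 ^ n) :
    tlTerm H θ m (((k : ℝ) + 1) / 2 ^ n) - tlTerm H θ m ((k : ℝ) / 2 ^ n)
      = 2 ^ (-(n : ℝ)) * ((2 : ℝ) ^ ((m : ℝ) * (1 - H)) * incrementSign θ n m k) := by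
  obtain ⟨d, rfl⟩ : ∃ d, n = m + d + 1 := ⟨n - m - 1, by omega⟩
  have hℓ : k / 2 ^ d / 2 < 2 ^ m := by
    rw [Nat.div_div_eq_div_mul, ← pow_succ, Nat.div_lt_iff_lt_mul (by positivity), ← pow_add]
    convert hk using 2
    ring
  have hscale : (2 : ℝ) ^ ((m : ℝ) * (1 / 2 - H)) * (2 ^ (-(m : ℝ) / 2) / 2 ^ (d + 1))
      = 2 ^ (-((m + d + 1 : ℕ) : ℝ)) * 2 ^ ((m : ℝ) * (1 - H)) := by
    rw [← Real.rpow_natCast, ← Real.rpow_sub two_pos, ← Real.rpow_add two_pos,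
      ← Real.rpow_add two_pos]
    push_cast
    ring_nf
  simp only [tlTerm, ← mul_sub, ← sum_sub_distrib, fs_add_one_div_sub, mul_ite, mul_zero,
    sum_ite_eq', Finset.mem_range, hℓ, if_true, incrementSign, show m + d + 1 - m - 1 = d by omega]
  linear_combination (θ m (k / 2 ^ d / 2) * (-1) ^ (k / 2 ^ d)) * hscale

lemma sPartial_add_one_div_sub (H : ℝ) (θ : ℕ → ℕ → ℝ) {n k : ℕ} (hk : k < 2 ^ n) :
    sPartial H θ n (((k : ℝ) + 1) / 2 ^ n) - sPartial H θ n ((k : ℝ) / 2 ^ n)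
      = 2 ^ (-(n : ℝ)) * ∑ m ∈ range n, (2 : ℝ) ^ ((m : ℝ) * (1 - H)) * incrementSign θ n m k := by
  rw [sPartial, sPartial, ← sum_sub_distrib, mul_sum]
  exact sum_congr rfl fun m hm => tlTerm_add_one_div_sub H θ (mem_range.mp hm) hk

lemma eq_of_mul_neg_one_pow_eq {s : ℝ} (hs : s ≠ 0) {q q' : ℕ} (hdiv : q / 2 = q' / 2)
    (h : s * (-1) ^ q = s * (-1) ^ q') : q = q' := by
  have hpow := mul_left_cancel₀ hs h
  rw [neg_one_pow_eq_pow_mod_two, neg_one_pow_eq_pow_mod_two (n := q')] at hpow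
  have hmod : q % 2 = q' % 2 := by
    rcases Nat.mod_two_eq_zero_or_one q with h₁ | h₁ <;>
      rcases Nat.mod_two_eq_zero_or_one q' with h₂ | h₂ <;> simp only [h₁, h₂] at hpow ⊢ <;>
      norm_num at hpow
  omega

lemma incrementSign_injective {θ : ℕ → ℕ → ℝ} (hθ : IsSign θ) (n : ℕ) :
    Function.Injective fun (k : Fin (2 ^ n)) (m : Fin n) => incrementSign θ n m k := by
  intro a b hab
  have hhalf (c i : ℕ) (hi : i < n) : c / 2 ^ (n - i - 1) / 2 = c / 2 ^ (n - i) := by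
    rw [Nat.div_div_eq_div_mul, ← pow_succ, show n - i - 1 + 1 = n - i by omega]
  suffices hprefix : ∀ i ≤ n, (a : ℕ) / 2 ^ (n - i) = b / 2 ^ (n - i) by
    exact Fin.ext (by simpa using hprefix n le_rfl)
  intro i
  induction i with
  | zero => simp [Nat.div_eq_of_lt a.isLt, Nat.div_eq_of_lt b.isLt]
  | succ i ih =>
    intro hi
    have hsign := congrFun hab ⟨i, hi⟩
    simp only [incrementSign, hhalf _ i hi, ih (by omega)] at hsign
    have hθne : θ i (b / 2 ^ (n - i)) ≠ 0 := by rcases hθ i (b / 2 ^ (n - i)) with h | h <;> simp [h]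
    rw [show n - (i + 1) = n - i - 1 by omega]
    exact eq_of_mul_neg_one_pow_eq hθne (by rw [hhalf _ i hi, hhalf _ i hi, ih (by omega)]) hsign

lemma existsUnique_eq_of_injective_of_card_eq {ι : Type*} [Fintype ι] {n : ℕ}
    (hcard : Fintype.card ι = 2 ^ n) {f : ι → Fin n → ℝ} (hf : Function.Injective f)
    (hsign : ∀ i m, f i m = 1 ∨ f i m = -1) {ε : Fin n → ℝ} (hε : ∀ m, ε m = 1 ∨ ε m = -1) :
    ∃! i, f i = ε := by
  set S := Fintype.piFinset fun _ : Fin n => ({1, -1} : Finset ℝ)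
  have hmem (v : Fin n → ℝ) : v ∈ S ↔ ∀ m, v m = 1 ∨ v m = -1 := by simp [S]
  have hScard : #S = 2 ^ n := by simp [S, card_pair (by norm_num : (1 : ℝ) ≠ -1)]
  obtain ⟨i, -, hi⟩ := Finset.surjOn_of_injOn_of_card_le (s := univ) f
    (fun i _ => (hmem _).2 (hsign i)) hf.injOn (by simp [hScard, hcard]) ((hmem ε).2 hε)
  exact ⟨i, hi, fun j hj => hf (hj.trans hi.symm)⟩

theorem stmt13_general (H : ℝ) (x : ℝ → ℝ) (hx : MemX H x) (n : ℕ) :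
    ∃ σ : ℕ → ℕ → ℝ, (∀ m k, σ m k = 1 ∨ σ m k = -1) ∧
      (∀ k : ℕ, k < 2 ^ n → x (((k : ℝ) + 1) / 2 ^ n) - x ((k : ℝ) / 2 ^ n)
        = 2 ^ (-(n : ℝ)) * ∑ m ∈ Finset.range n, (2:ℝ) ^ ((m:ℝ) * (1 - H)) * σ m k) ∧
      (∀ ε : Fin n → ℝ, (∀ m, ε m = 1 ∨ ε m = -1) →
        ∃! k : Fin (2 ^ n), ∀ m : Fin n, σ (m : ℕ) (k : ℕ) = ε m) := by
  obtain ⟨θ, hθ, hxθ⟩ := hx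
  refine ⟨incrementSign θ n, hθ.incrementSign n, fun k hk => ?_, fun ε hε => ?_⟩
  · have hsucc : (k : ℝ) + 1 = ((k + 1 : ℕ) : ℝ) := by push_cast; rfl
    rw [hxθ, hxθ, hsucc, tsum_tlTerm_natCast_div_two_pow, tsum_tlTerm_natCast_div_two_pow, ← hsucc]
    exact sPartial_add_one_div_sub H θ hk
  · obtain ⟨k, hk, huniq⟩ := existsUnique_eq_of_injective_of_card_eq (Fintype.card_fin _)
      (incrementSign_injective hθ n) (fun k m => hθ.incrementSign n m k) hε
    exact ⟨k, congrFun hk, fun k' hk' => huniq k' (funext hk')⟩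

theorem stmt13 (H : ℝ) (hH : H ∈ Set.Ioo (0:ℝ) 1) (x : ℝ → ℝ) (hx : MemX H x) (n : ℕ) :
    ∃ σ : ℕ → ℕ → ℝ, (∀ m k, σ m k = 1 ∨ σ m k = -1) ∧
      (∀ k : ℕ, k < 2 ^ n → x (((k : ℝ) + 1) / 2 ^ n) - x ((k : ℝ) / 2 ^ n)
        = 2 ^ (-(n : ℝ)) * ∑ m ∈ Finset.range n, (2:ℝ) ^ ((m:ℝ) * (1 - H)) * σ m k) ∧
      (∀ ε : Fin n → ℝ, (∀ m, ε m = 1 ∨ ε m = -1) →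
        ∃! k : Fin (2 ^ n), ∀ m : Fin n, σ (m : ℕ) (k : ℕ) = ε m) :=
  stmt13_general H x hx n
end
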